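/- There exists a function f ∈ L^2(𝕋) such that for every positive integer n and every ε > 0, the function (z−1)^n f(z) is not essentially bounded on B_ε(1) ∩ 𝕋. Concretely, one may take f = ∑_{k>2} k!·1_{X_k}, where X_k is an arc centred at a point x_k ∈ 𝕋 with |x_k − 1| = 1/k and of normalized measure 1/(k!·k), the arcs being pairwise disjoint: then ‖f‖²_{L²} = ∑_{k>2} 1/k² < ∞ while |f(x_k)(x_k−1)^n| = k!/k^n → ∞ for each n. -/

import Mathlib

open MeasureTheory Complex Filter Set Metric Topology
open scoped ENNReal NNReal ComplexConjugate

noncomputable section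

/-- The open unit disk in ℂ. -/
def UnitDisk : Set ℂ := Metric.ball 0 1

/-- The unit circle in ℂ. -/
def UnitCircle : Set ℂ := Metric.sphere 0 1

/-- Normalized Lebesgue (arclength) measure on the unit circle, as a measure on ℂ. -/
def circleM : Measure ℂ :=
  (ENNReal.ofReal (2 * Real.pi))⁻¹ •
    Measure.map (fun θ : ℝ => Complex.exp (θ * Complex.I))
      (volume.restrict (Set.Ioc 0 (2 * Real.pi)))

/-- `f` is the a.e. radial boundary value function of `F`. -/
def IsBoundaryValue (F f : ℂ → ℂ) : Prop :=
  ∀ᵐ ζ ∂circleM, Tendsto (fun r : ℝ => F ((r : ℂ) * ζ)) (𝓝[<] (1 : ℝ)) (𝓝 (f ζ))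

/-- Membership of an analytic function on the disk in the Hardy space `H^p`. -/
def MemHp (p : ℝ≥0∞) (F : ℂ → ℂ) : Prop :=
  DifferentiableOn ℂ F UnitDisk ∧
    ∃ C : ℝ≥0∞, C ≠ ⊤ ∧ ∀ r : ℝ, 0 ≤ r → r < 1 →
      eLpNorm (fun ζ => F ((r : ℂ) * ζ)) p circleM ≤ C

/-- A boundary function lies in the Hardy space `H^p(𝕋)`. -/
def MemHpBdry (p : ℝ≥0∞) (f : ℂ → ℂ) : Prop :=
  ∃ F : ℂ → ℂ, MemHp p F ∧ IsBoundaryValue F f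

/-- All negative Fourier coefficients of `f` vanish. -/
def NegCoeffVanish (f : ℂ → ℂ) : Prop :=
  ∀ n : ℕ, ∫ ζ, f ζ * ζ ^ (n + 1) ∂circleM = 0

/-- The Hardy space `H^2(𝕋)`, viewed as the set of boundary functions in `L^2(𝕋)`
whose negative Fourier coefficients vanish. -/
def MemH2 (f : ℂ → ℂ) : Prop :=
  MemLp f 2 circleM ∧ NegCoeffVanish f

/-- The Riesz projection of an integrable function on the circle, as an analytic
function on the unit disk: `(P f)(z) = ∫ f(ζ)/(1 - conj ζ · z) dm(ζ)`. -/
def RieszProj (f : ℂ → ℂ) : ℂ → ℂ :=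
  fun z => ∫ ζ, f ζ / (1 - conj ζ * z) ∂circleM

/-- `g` is essentially bounded (w.r.t. circle measure) on the set `S`. -/
def EssBddOn (g : ℂ → ℂ) (S : Set ℂ) : Prop :=
  ∃ C : ℝ, ∀ᵐ ζ ∂circleM, ζ ∈ S → ‖g ζ‖ ≤ C

/-- `ζ` is a pole of `g`: `g` is not essentially bounded on any arc around `ζ`. -/
def IsPole (g : ℂ → ℂ) (ζ : ℂ) : Prop :=
  ∀ ε > (0 : ℝ), ¬ EssBddOn g (Metric.ball ζ ε)

/-- `g` has a pole of order exactly `n` at `ζ`. -/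
def PoleOrder (g : ℂ → ℂ) (ζ : ℂ) (n : ℕ) : Prop :=
  (∃ ε > (0 : ℝ), EssBddOn (fun z => (z - ζ) ^ n * g z) (Metric.ball ζ ε)) ∧
    ∀ i < n, ¬ ∃ ε > (0 : ℝ), EssBddOn (fun z => (z - ζ) ^ i * g z) (Metric.ball ζ ε)

/-- A function analytic on the disk is analytic at a boundary point `ζ` if it
extends analytically to a neighbourhood of `ζ`. -/
def AnalyticAtBdry (U : ℂ → ℂ) (ζ : ℂ) : Prop :=
  ∃ ε > (0 : ℝ), ∃ G : ℂ → ℂ, DifferentiableOn ℂ G (Metric.ball ζ ε) ∧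
    Set.EqOn G U (Metric.ball ζ ε ∩ UnitDisk)

/-- The product of Toeplitz operators `T_u T_v` (where `U` is the analytic symbol,
given as a function on the disk, and `v ∈ L²(𝕋)`) is bounded on `H²(𝕋)`:
its range lies in `H²(𝕋)` and it satisfies a norm bound there. -/
def BoundedToeplitzProd (U v : ℂ → ℂ) : Prop :=
  ∃ C : ℝ≥0∞, C ≠ ⊤ ∧ ∀ f : ℂ → ℂ, MemH2 f →
    ∃ g : ℂ → ℂ, MemH2 g ∧
      IsBoundaryValue (fun z => U z * RieszProj (fun ζ => v ζ * f ζ) z) g ∧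
      eLpNorm g 2 circleM ≤ C * eLpNorm f 2 circleM

/-- The Poisson extension of an integrable real function on the circle, at `w ∈ 𝔻`. -/
def Poisson (ρ : ℂ → ℝ) (w : ℂ) : ℝ :=
  ∫ ζ, ((1 - ‖w‖ ^ 2) / ‖ζ - w‖ ^ 2) * ρ ζ ∂circleM

/-- An outer function on the unit disk. -/
def IsOuterFn (G : ℂ → ℂ) : Prop :=
  ∃ c : ℂ, ‖c‖ = 1 ∧ ∃ φ : ℂ → ℝ,
    Integrable (fun ζ => Real.log (φ ζ)) circleM ∧
    ∀ z ∈ UnitDisk, G z =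
      c * Complex.exp (∫ ζ, ((ζ + z) / (ζ - z)) * (Real.log (φ ζ) : ℂ) ∂circleM)

/-- A boundary function in `H²(𝕋)` is outer if its analytic extension to the disk
(given by the Riesz projection) is an outer function. -/
def IsOuterBdry (f : ℂ → ℂ) : Prop := IsOuterFn (RieszProj f)

/-!
Take `f(e^{iθ}) = e^{1/θ}` on the arcs `θ ∈ (1/t - e^{-5t}, 1/t]`, `t = 1, 2, …`, and `f = 0`
elsewhere. On the `t`-th arc `1/θ ≤ 2t`, so it contributes at most `e^{4t} e^{-5t} = e^{-t}` to
`‖f‖₂²`, which is therefore finite. On the other hand `|e^{iθ} - 1| ≥ 2θ/π`, and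
`θ^n e^{1/θ} → ∞` as `θ → 0⁺`, so on the arcs close enough to `1` (which have positive measure)
`|(z - 1)^n f(z)|` exceeds any given bound.
-/

open Function
open scoped Real

noncomputable section

lemma memLp_indicator_iUnion {α E ι : Type*} [MeasurableSpace α] [NormedAddCommGroup E]
    [Countable ι] {μ : Measure α} {p : ℝ≥0∞} {f : α → E} {s : ι → Set α}
    (hs : ∀ i, MeasurableSet (s i)) (hf : AEStronglyMeasurable f μ) (hp0 : p ≠ 0) (hp : p ≠ ∞)
    (h : ∑' i, ∫⁻ x in s i, ‖f x‖ₑ ^ p.toReal ∂μ ≠ ∞) : MemLp ((⋃ i, s i).indicator f) p μ := by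
  rw [memLp_indicator_iff_restrict (MeasurableSet.iUnion hs)]
  exact ⟨hf.restrict, (eLpNorm_lt_top_iff_lintegral_rpow_enorm_lt_top hp0 hp).2 <|
    (lintegral_iUnion_le _ _).trans_lt h.lt_top⟩

lemma two_div_pi_mul_le_norm_exp_mul_I_sub_one {θ : ℝ} (h0 : 0 ≤ θ) (hπ : θ ≤ π) :
    2 / π * θ ≤ ‖cexp (θ * I) - 1‖ := by
  rw [mul_comm (θ : ℂ), norm_exp_I_mul_ofReal_sub_one, Real.norm_eq_abs]
  have := Real.mul_le_sin (x := θ / 2) (by linarith) (by linarith)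
  calc 2 / π * θ = 2 * (2 / π * (θ / 2)) := by ring
    _ ≤ |2 * Real.sin (θ / 2)| := by linarith [le_abs_self (2 * Real.sin (θ / 2))]

lemma tendsto_pow_mul_exp_inv_nhdsGT_zero (n : ℕ) :
    Tendsto (fun θ : ℝ => θ ^ n * Real.exp θ⁻¹) (𝓝[>] 0) atTop :=
  ((Real.tendsto_exp_div_pow_atTop n).comp tendsto_inv_nhdsGT_zero).congr fun θ => by
    simp [div_eq_mul_inv, mul_comm]

section CircleMeasure

lemma ae_circleM_exp_mul_I {P : ℂ → Prop} (h : ∀ᵐ z ∂circleM, P z) :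
    ∀ᵐ θ : ℝ ∂volume.restrict (Ioc 0 (2 * π)), P (cexp (θ * I)) := by
  rw [circleM,
    Measure.ae_ennreal_smul_measure_iff (ENNReal.inv_ne_zero.2 ENNReal.ofReal_ne_top)] at h
  exact ae_of_ae_map (by fun_prop) h

lemma not_ae_circleM {P : ℂ → Prop} {A : Set ℝ} (hA : A ⊆ Ioc 0 (2 * π)) (hA0 : volume A ≠ 0)
    (hP : ∀ θ ∈ A, ¬ P (cexp (θ * I))) : ¬ ∀ᵐ z ∂circleM, P z := by
  intro h
  have hnull : volume {θ : ℝ | ¬ (θ ∈ Ioc 0 (2 * π) → P (cexp (θ * I)))} = 0 :=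
    ae_iff.1 <| (ae_restrict_iff' measurableSet_Ioc).1 (ae_circleM_exp_mul_I h)
  refine hA0 (measure_mono_null (fun θ hθ => ?_) hnull)
  exact fun hPθ => hP θ hθ (hPθ (hA hθ))

variable {E : Type*} [NormedAddCommGroup E]

lemma apply_arg_exp_mul_I {g : ℝ → E} (hg : support g ⊆ Ioc 0 π) {θ : ℝ}
    (hθ : θ ∈ Ioc 0 (2 * π)) : g (arg (cexp (θ * I))) = g θ := by
  rw [arg_exp_mul_I]
  by_cases hθπ : θ ≤ π
  · rw [(toIocMod_eq_self _).2 ⟨by linarith [hθ.1, Real.pi_pos], by linarith⟩]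
  · have harg : toIocMod Real.two_pi_pos (-π) θ = θ - 2 * π :=
      (toIocMod_eq_iff _).2 ⟨⟨by linarith, by linarith [hθ.2]⟩, 1, by simp⟩
    rw [harg, notMem_support.1 fun h => hθπ (hg h).2,
      notMem_support.1 (fun h => by linarith [(hg h).1, hθ.2] : θ - 2 * π ∉ support g)]

lemma memLp_comp_arg {g : ℝ → E} {p : ℝ≥0∞} (hgm : StronglyMeasurable g)
    (hg : support g ⊆ Ioc 0 π) (hgp : MemLp g p) : MemLp (fun z => g (arg z)) p circleM := by
  refine MemLp.smul_measure ?_ (by simp [Real.pi_pos])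
  rw [memLp_map_measure_iff (g := fun z => g (arg z))
    (hgm.comp_measurable measurable_arg).aestronglyMeasurable (by fun_prop)]
  refine (hgp.restrict _).ae_eq ((ae_restrict_iff' measurableSet_Ioc).2 (ae_of_all _ ?_))
  exact fun θ hθ => (apply_arg_exp_mul_I hg hθ).symm

end CircleMeasure

def spikeArc (t : ℝ) : Set ℝ := Ioc (t⁻¹ - Real.exp (-5 * t)) t⁻¹

def spikeSet : Set ℝ := ⋃ k : ℕ, spikeArc (k + 1)

def spikeProfile : ℝ → ℂ := spikeSet.indicator fun θ => (Real.exp θ⁻¹ : ℂ)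

def spikeFun (z : ℂ) : ℂ := spikeProfile (arg z)

lemma bounds_of_mem_spikeArc {t θ : ℝ} (ht : 0 < t) (hθ : θ ∈ spikeArc t) :
    0 < θ ∧ θ ≤ t⁻¹ ∧ θ⁻¹ ≤ 2 * t := by
  have hwidth : Real.exp (-5 * t) ≤ (2 * t)⁻¹ := by
    rw [neg_mul, Real.exp_neg]
    exact inv_anti₀ (by positivity) (by linarith [Real.add_one_le_exp (5 * t)])
  have hlow : (2 * t)⁻¹ < θ := by
    have : t⁻¹ - (2 * t)⁻¹ = (2 * t)⁻¹ := by field_simp; ring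
    linarith [hθ.1]
  have hθ0 : 0 < θ := lt_trans (by positivity) hlow
  exact ⟨hθ0, hθ.2, by simpa using inv_anti₀ (by positivity) hlow.le⟩

lemma spikeSet_subset_Ioc : spikeSet ⊆ Ioc 0 1 := by
  intro θ hθ
  obtain ⟨k, hk⟩ := mem_iUnion.1 hθ
  obtain ⟨hθ0, hθt, -⟩ := bounds_of_mem_spikeArc (by positivity) hk
  exact ⟨hθ0, hθt.trans (inv_le_one_of_one_le₀ (by simp))⟩

lemma volume_spikeArc (t : ℝ) : volume (spikeArc t) = ENNReal.ofReal (Real.exp (-5 * t)) := by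
  simp [spikeArc, Real.volume_Ioc]

lemma setLIntegral_spikeArc_le {t : ℝ} (ht : 0 < t) :
    ∫⁻ θ in spikeArc t, ‖(Real.exp θ⁻¹ : ℂ)‖ₑ ^ (2 : ℝ) ≤ ENNReal.ofReal (Real.exp (-t)) := by
  have hbound : ∀ θ ∈ spikeArc t,
      ‖(Real.exp θ⁻¹ : ℂ)‖ₑ ^ (2 : ℝ) ≤ ENNReal.ofReal (Real.exp (4 * t)) := by
    intro θ hθ
    rw [← ofReal_norm, Complex.norm_real, Real.norm_of_nonneg (Real.exp_pos _).le,
      ENNReal.ofReal_rpow_of_nonneg (Real.exp_pos _).le zero_le_two, ← Real.exp_mul]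
    exact ENNReal.ofReal_le_ofReal (Real.exp_le_exp.2 (by
      linarith [(bounds_of_mem_spikeArc ht hθ).2.2]))
  calc ∫⁻ θ in spikeArc t, ‖(Real.exp θ⁻¹ : ℂ)‖ₑ ^ (2 : ℝ)
      ≤ ∫⁻ _ in spikeArc t, ENNReal.ofReal (Real.exp (4 * t)) :=
        setLIntegral_mono measurable_const hbound
    _ = ENNReal.ofReal (Real.exp (-t)) := by
        rw [setLIntegral_const, volume_spikeArc, ← ENNReal.ofReal_mul (Real.exp_pos _).le,
          ← Real.exp_add]
        ring_nf

lemma memLp_spikeProfile : MemLp spikeProfile 2 := by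
  refine memLp_indicator_iUnion (fun _ => measurableSet_Ioc) (by fun_prop) two_ne_zero
    ENNReal.ofNat_ne_top (ne_top_of_le_ne_top ?_ (ENNReal.tsum_le_tsum fun k =>
      (ENNReal.toReal_ofNat 2).symm ▸ setLIntegral_spikeArc_le (t := k + 1) (by positivity)))
  have hsum : Summable fun k : ℕ => Real.exp (-(k + 1)) := by
    simpa using (summable_nat_add_iff 1).2 Real.summable_exp_neg_nat
  rw [← ENNReal.ofReal_tsum_of_nonneg (fun _ => (Real.exp_pos _).le) hsum]
  exact ENNReal.ofReal_ne_top

lemma volume_spikeSet_inter_Ioo_ne_zero {δ : ℝ} (hδ : 0 < δ) :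
    volume (spikeSet ∩ Ioo 0 δ) ≠ 0 := by
  obtain ⟨k, hk⟩ := exists_nat_one_div_lt hδ
  have hsub : spikeArc (k + 1) ⊆ spikeSet ∩ Ioo 0 δ := fun θ hθ => by
    obtain ⟨hθ0, hθk, -⟩ := bounds_of_mem_spikeArc (by positivity) hθ
    exact ⟨mem_iUnion.2 ⟨k, hθ⟩, hθ0, hθk.trans_lt (by simpa using hk)⟩
  refine (lt_of_lt_of_le ?_ (measure_mono hsub)).ne'
  simp [volume_spikeArc, Real.exp_pos]

lemma support_spikeProfile_subset : support spikeProfile ⊆ Ioc 0 π := fun θ hθ => by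
  obtain ⟨hθ0, hθ1⟩ := spikeSet_subset_Ioc (support_indicator_subset hθ)
  exact ⟨hθ0, hθ1.trans (by linarith [Real.pi_gt_three])⟩

lemma spikeFun_exp_mul_I {θ : ℝ} (hθ : θ ∈ Ioc 0 (2 * π)) :
    spikeFun (cexp (θ * I)) = spikeProfile θ :=
  apply_arg_exp_mul_I support_spikeProfile_subset hθ

lemma measurable_spikeProfile : Measurable spikeProfile :=
  (by fun_prop : Measurable fun θ : ℝ => (Real.exp θ⁻¹ : ℂ)).indicator
    (MeasurableSet.iUnion fun _ => measurableSet_Ioc)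

lemma memLp_spikeFun : MemLp spikeFun 2 circleM :=
  memLp_comp_arg measurable_spikeProfile.stronglyMeasurable support_spikeProfile_subset
    memLp_spikeProfile

lemma eventually_spikeFun_large (n : ℕ) {ε : ℝ} (hε : 0 < ε) (C : ℝ) :
    ∀ᶠ θ : ℝ in 𝓝[>] 0, θ ∈ spikeSet →
      cexp (θ * I) ∈ ball 1 ε ∧ C < ‖(cexp (θ * I) - 1) ^ n * spikeFun (cexp (θ * I))‖ := by
  have hball : ∀ᶠ θ : ℝ in 𝓝[>] 0, cexp (θ * I) ∈ ball 1 ε := by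
    have : Tendsto (fun θ : ℝ => cexp (θ * I)) (𝓝 0) (𝓝 1) := by
      simpa using (Continuous.tendsto (by fun_prop) 0 : Tendsto (fun θ : ℝ => cexp (θ * I)) _ _)
    exact (this.eventually (ball_mem_nhds 1 hε)).filter_mono nhdsWithin_le_nhds
  have hlarge := ((tendsto_pow_mul_exp_inv_nhdsGT_zero n).const_mul_atTop
    (by positivity : (0 : ℝ) < (2 / π) ^ n)).eventually_gt_atTop C
  filter_upwards [hball, hlarge] with θ hθε hθC hθ
  obtain ⟨hθ0, hθ1⟩ := spikeSet_subset_Ioc hθ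
  refine ⟨hθε, hθC.trans_le ?_⟩
  rw [spikeFun_exp_mul_I ⟨hθ0, by linarith [Real.pi_gt_three]⟩, spikeProfile,
    indicator_of_mem hθ, norm_mul, norm_pow, Complex.norm_real,
    Real.norm_of_nonneg (Real.exp_pos _).le, ← mul_assoc, ← mul_pow]
  gcongr
  exact two_div_pi_mul_le_norm_exp_mul_I_sub_one hθ0.le (by linarith [Real.pi_gt_three])

end

/-- There exists `f ∈ L²(𝕋)` such that for every `n ≥ 1` and every `ε > 0`,
`(z-1)^n f(z)` is not essentially bounded on `B_ε(1) ∩ 𝕋`. -/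
theorem exists_L2_no_finite_order_pole :
    ∃ f : ℂ → ℂ, MemLp f 2 circleM ∧
      ∀ n : ℕ, 1 ≤ n → ∀ ε > (0 : ℝ),
        ¬ EssBddOn (fun z => (z - 1) ^ n * f z) (Metric.ball 1 ε) := by
  refine ⟨spikeFun, memLp_spikeFun, fun n _ ε hε ⟨C, hC⟩ => ?_⟩
  obtain ⟨δ, hδ, hlarge⟩ := mem_nhdsGT_iff_exists_Ioo_subset.1 (eventually_spikeFun_large n hε C)
  have hsub : spikeSet ∩ Ioo 0 δ ⊆ Ioc 0 (2 * π) := fun θ hθ =>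
    Ioc_subset_Ioc_right (by linarith [Real.pi_gt_three]) (spikeSet_subset_Ioc hθ.1)
  refine not_ae_circleM hsub (volume_spikeSet_inter_Ioo_ne_zero hδ) (fun θ hθ hbdd => ?_) hC
  obtain ⟨hθε, hθC⟩ := hlarge hθ.2 hθ.1
  exact hθC.not_ge (hbdd hθε)
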